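/- arXiv:2203.09897 — 8 statements merged into one kernel-verified Lean document; each statement's English description precedes it below -/
import Mathlib

section
/- Let A be a ring, f ∈ A, and M an A-module whose f^∞-torsion is bounded by N (i.e. the set of elements killed by some power of f equals the set killed by f^N). Then the classical f-adic completion of M also has f^∞-torsion bounded by N. -/
/-!
Write `y ∈ M^` as compatible classes `y_k ∈ M / f^k M`, and suppose `f^n • y = 0`. Lift `y_{k+n}`
to `m ∈ M`; then `f^n m = f^(k+n) m'` for some `m'`, so `m - f^k m'` is `f^n`-torsion, hence
killed by `f^N`. Thus `f^N m = f^k (f^N m') ∈ f^k M`, and `f^N • y_k`, the image of `f^N m`, vanishes.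
-/

open Pointwise

def HasBoundedPowTorsion {A : Type*} [CommRing A] (f : A) (M : Type*) [AddCommGroup M]
    [Module A M] (N : ℕ) : Prop :=
  ∀ x : M, (∃ n : ℕ, f ^ n • x = 0) → f ^ N • x = 0

section
variable {A : Type*} [CommRing A] {f : A} {M : Type*} [AddCommGroup M] [Module A M]

theorem Submodule.mem_span_singleton_pow_smul_top_iff {j : ℕ} {x : M} :
    x ∈ Ideal.span {f} ^ j • (⊤ : Submodule A M) ↔ ∃ m : M, f ^ j • m = x := by
  simp [Ideal.span_singleton_pow, Submodule.ideal_span_singleton_smul,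
    Submodule.mem_smul_pointwise_iff_exists]

theorem HasBoundedPowTorsion.pow_smul_mem_of_pow_smul_mem {N : ℕ}
    (hM : HasBoundedPowTorsion f M N) {k n : ℕ} {m : M}
    (hm : f ^ n • m ∈ Ideal.span {f} ^ (k + n) • (⊤ : Submodule A M)) :
    f ^ N • m ∈ Ideal.span {f} ^ k • (⊤ : Submodule A M) := by
  obtain ⟨m', hm'⟩ := Submodule.mem_span_singleton_pow_smul_top_iff.mp hm
  have htors : f ^ n • (m - f ^ k • m') = 0 := by
    rw [smul_sub, smul_smul, ← pow_add, add_comm, hm', sub_self]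
  have hN := hM _ ⟨n, htors⟩
  rw [smul_sub, sub_eq_zero, smul_comm] at hN
  exact Submodule.mem_span_singleton_pow_smul_top_iff.mpr ⟨_, hN.symm⟩

theorem AdicCompletion.hasBoundedPowTorsion {N : ℕ} (hM : HasBoundedPowTorsion f M N) :
    HasBoundedPowTorsion f (AdicCompletion (Ideal.span {f}) M) N := by
  rintro y ⟨n, hn⟩
  ext k
  obtain ⟨m, hm⟩ := Submodule.Quotient.mk_surjective _ (y.val (k + n))
  have hfm : f ^ n • m ∈ Ideal.span {f} ^ (k + n) • (⊤ : Submodule A M) := by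
    rw [← Submodule.Quotient.mk_eq_zero, Submodule.Quotient.mk_smul, hm,
      ← AdicCompletion.val_smul_apply, hn, AdicCompletion.val_zero_apply]
  rw [AdicCompletion.val_smul_apply, AdicCompletion.val_zero_apply,
    ← y.2 (Nat.le_add_right k n), ← hm, ← map_smul, ← Submodule.Quotient.mk_smul]
  exact (Submodule.Quotient.mk_eq_zero _).mpr (hM.pow_smul_mem_of_pow_smul_mem hfm)

end

/-- If an `A`-module `M` has `f^∞`-torsion bounded by `N` (every element killed by some power
of `f` is killed by `f^N`), then its classical `f`-adic completion also has `f^∞`-torsion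
bounded by `N`. -/
theorem stmt0 (A : Type*) [CommRing A] (f : A)
    (M : Type*) [AddCommGroup M] [Module A M] (N : ℕ)
    (h : ∀ x : M, (∃ n : ℕ, f ^ n • x = 0) → f ^ N • x = 0) :
    ∀ y : AdicCompletion (Ideal.span {f}) M,
      (∃ n : ℕ, f ^ n • y = 0) → f ^ N • y = 0 :=
  AdicCompletion.hasBoundedPowTorsion h
end

section
/- Let A be a ring, f, g ∈ A, and M an A-module such that M/gM has bounded f^∞-torsion. Then the (f,g)-adic topology on the submodule gM coincides with the topology induced on gM by the (f,g)-adic topology of M. Concretely: for every n there exists m such that gM ∩ (f,g)^m M ⊆ (f,g)^n (gM). -/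
private lemma pow_sup_le' {A : Type*} [CommRing A] (I J : Ideal A) :
    ∀ m : ℕ, (I ⊔ J) ^ (m + 1) ≤ I ^ (m + 1) ⊔ J * (I ⊔ J) ^ m := by
  intro m
  induction m with
  | zero => simp
  | succ m ih =>
      calc (I ⊔ J) ^ (m + 2) = (I ⊔ J) * (I ⊔ J) ^ (m + 1) := by ring
        _ ≤ (I ⊔ J) * (I ^ (m + 1) ⊔ J * (I ⊔ J) ^ m) := Ideal.mul_mono_right ih
        _ = I * I ^ (m + 1) ⊔ I * (J * (I ⊔ J) ^ m) ⊔
              (J * I ^ (m + 1) ⊔ J * (J * (I ⊔ J) ^ m)) := by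
            rw [Ideal.sup_mul, Ideal.mul_sup, Ideal.mul_sup]
        _ ≤ I ^ (m + 2) ⊔ J * (I ⊔ J) ^ (m + 1) := by
            apply sup_le (sup_le ?_ ?_) (sup_le ?_ ?_)
            · exact le_sup_of_le_left (le_of_eq (pow_succ' I (m + 1)).symm)
            · refine le_sup_of_le_right ?_
              rw [← mul_assoc, mul_comm I J, mul_assoc, pow_succ']
              exact Ideal.mul_mono_right (Ideal.mul_mono_left le_sup_left)
            · exact le_sup_of_le_right (Ideal.mul_mono_right
                (Ideal.pow_right_mono le_sup_left _))
            · refine le_sup_of_le_right (Ideal.mul_mono_right ?_)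
              rw [pow_succ']
              exact Ideal.mul_mono_left le_sup_right

/-- If `M/gM` has `f^∞`-torsion bounded by `N`, then the `(f,g)`-adic topology on `gM`
coincides with the topology induced by the `(f,g)`-adic topology of `M`: for every `n`
there is `m` with `gM ∩ (f,g)^m M ⊆ (f,g)^n (gM)`. -/
theorem stmt1 (A : Type*) [CommRing A] (f g : A)
    (M : Type*) [AddCommGroup M] [Module A M] (N : ℕ)
    (h : ∀ x : M ⧸ (Ideal.span {g} • ⊤ : Submodule A M),
      (∃ k : ℕ, f ^ k • x = 0) → f ^ N • x = 0) :
    ∀ n : ℕ, ∃ m : ℕ,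
      (Ideal.span {f, g} ^ m • ⊤ : Submodule A M) ⊓ (Ideal.span {g} • ⊤ : Submodule A M) ≤
        Ideal.span {f, g} ^ n • (Ideal.span {g} • (⊤ : Submodule A M)) := by
  intro n
  set I : Ideal A := Ideal.span {f, g} with hI
  set gM : Submodule A M := Ideal.span {g} • ⊤ with hgM
  refine ⟨n + N + 1, ?_⟩
  have hsplit : I ^ (n + N + 1) ≤ Ideal.span {f ^ (n + N + 1)} ⊔ Ideal.span {g} * I ^ (n + N) := by
    have hI' : I = Ideal.span {f} ⊔ Ideal.span {g} := by
      rw [hI, Ideal.span_insert]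
    rw [hI', ← Ideal.span_singleton_pow]
    exact pow_sup_le' _ _ _
  have hpiece : (Ideal.span {g} * I ^ (n + N)) • (⊤ : Submodule A M) ≤ I ^ n • gM := by
    rw [mul_comm, ← Ideal.smul_eq_mul, Submodule.smul_assoc, hgM]
    exact Submodule.smul_mono_left (Ideal.pow_le_pow_right (by omega))
  rintro x ⟨hx1, hx2⟩
  have hx1' : x ∈ (Ideal.span {f ^ (n + N + 1)} ⊔ Ideal.span {g} * I ^ (n + N)) •
      (⊤ : Submodule A M) := Submodule.smul_mono_left hsplit hx1
  rw [Submodule.sup_smul] at hx1'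
  obtain ⟨a, ha, b, hb, rfl⟩ := Submodule.mem_sup.mp hx1'
  have hb' : b ∈ I ^ n • gM := hpiece hb
  -- write a = f^(n+N+1) • y
  rw [Submodule.ideal_span_singleton_smul] at ha
  obtain ⟨y, -, hy⟩ := ha
  have hy : f ^ (n + N + 1) • y = a := hy
  -- a ∈ gM
  have haM : a ∈ gM := by
    have hbM : b ∈ gM := (Submodule.smul_le_right : I ^ n • gM ≤ gM) hb'
    have := Submodule.sub_mem gM hx2 hbM
    simpa using this
  -- use boundedness in the quotient
  have hq : f ^ N • (Submodule.Quotient.mk y : M ⧸ gM) = 0 := by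
    apply h
    refine ⟨n + N + 1, ?_⟩
    rw [← Submodule.Quotient.mk_smul, Submodule.Quotient.mk_eq_zero]
    rw [hy]; exact haM
  have hfy : f ^ N • y ∈ gM := by
    rwa [← Submodule.Quotient.mk_smul, Submodule.Quotient.mk_eq_zero] at hq
  have ha' : a ∈ I ^ n • gM := by
    have : a = f ^ (n + 1) • (f ^ N • y) := by
      rw [smul_smul, ← pow_add, ← hy]; ring_nf
    rw [this]
    refine Submodule.smul_mem_smul ?_ hfy
    have hfI : f ∈ I := Ideal.subset_span (by simp)
    exact Ideal.pow_le_pow_right (by omega) (Ideal.pow_mem_pow hfI (n + 1))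
  exact Submodule.add_mem _ ha' hb'
end

section
/- Let A be a ring with f ∈ A such that A has f^∞-torsion bounded by N, and let M be an A-module which is separated for the f-adic topology and such that M/f^n M is flat over A/f^n A for all n. Then M has f^∞-torsion bounded by N; more precisely, the f^k-torsion of M equals M ⊗_A (f^N-torsion of A) for all k ≥ N. -/
open scoped TensorProduct

/-- For a flat module `P` over `R`, the `r`-torsion of `P` is `Ann(r) • P`. -/
lemma flat_torsionBy_eq {R : Type*} [CommRing R] (P : Type*) [AddCommGroup P] [Module R P]
    [Module.Flat R P] (r : R) :
    Submodule.torsionBy R P r = (Submodule.torsionBy R R r : Ideal R) • (⊤ : Submodule R P) := by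
  set J : Ideal R := Submodule.torsionBy R R r with hJ
  have hker : J = LinearMap.ker (LinearMap.lsmul R R r) := by
    ext a
    simp [hJ, Submodule.mem_torsionBy_iff, smul_comm r a]
  apply le_antisymm
  · intro p hp
    rw [Submodule.mem_torsionBy_iff] at hp
    let φ : (R ⧸ J) →ₗ[R] R := J.liftQ (LinearMap.lsmul R R r) (le_of_eq hker)
    have hφ : Function.Injective φ := by
      rw [← LinearMap.ker_eq_bot]
      exact Submodule.ker_liftQ_eq_bot' _ _ hker
    have hinj : Function.Injective (φ.lTensor P) :=
      Module.Flat.lTensor_preserves_injective_linearMap φ hφ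
    let e := TensorProduct.tensorQuotEquivQuotSMul P J
    have h1 : e.symm (Submodule.Quotient.mk p) = p ⊗ₜ[R] (1 : R ⧸ J) := rfl
    have h0 : (φ.lTensor P) (p ⊗ₜ[R] (1 : R ⧸ J)) = 0 := by
      have h1' : (1 : R ⧸ J) = Submodule.Quotient.mk (1 : R) := rfl
      rw [LinearMap.lTensor_tmul, h1']
      have h2' : φ (Submodule.Quotient.mk (1 : R)) = r := by
        rw [Submodule.liftQ_apply]
        simp
      rw [h2']
      calc p ⊗ₜ[R] r = p ⊗ₜ[R] (r • (1 : R)) := by rw [smul_eq_mul, mul_one]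
        _ = (r • p) ⊗ₜ[R] (1 : R) := (TensorProduct.smul_tmul r p (1 : R)).symm
        _ = 0 := by rw [hp, TensorProduct.zero_tmul]
    have : p ⊗ₜ[R] (1 : R ⧸ J) = 0 := hinj (by rw [h0, map_zero])
    have h2 : e.symm (Submodule.Quotient.mk p) = 0 := by rw [h1, this]
    have h3 : Submodule.Quotient.mk (p := (J • ⊤ : Submodule R P)) p = 0 := by
      have := congrArg e h2
      simpa using this
    exact (Submodule.Quotient.mk_eq_zero _).mp h3
  · apply Submodule.smul_le.mpr
    intro a ha p _
    rw [Submodule.mem_torsionBy_iff]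
    rw [smul_smul]
    have : r * a = 0 := by
      have := (Submodule.mem_torsionBy_iff _ _).mp ha
      simpa [smul_eq_mul] using this
    rw [this, zero_smul]

/-- If `A` has `f^∞`-torsion bounded by `N` and `M` is separated for the `f`-adic topology
with `M/f^n M` flat over `A/f^n A` for all `n`, then `M` has `f^∞`-torsion bounded by `N`;
more precisely, for `k ≥ N` the `f^k`-torsion of `M` equals the image of
`M ⊗_A ({}_{f^N} A)`, i.e. `({}_{f^N} A) • M`. -/
theorem stmt3 (A : Type*) [CommRing A] (f : A) (N : ℕ)
    (M : Type*) [AddCommGroup M] [Module A M]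
    (hA : ∀ a : A, (∃ n : ℕ, f ^ n * a = 0) → f ^ N * a = 0)
    (hsep : (⨅ n : ℕ, (Ideal.span {f} ^ n • ⊤ : Submodule A M)) = ⊥)
    (hflat : ∀ n : ℕ, Module.Flat (A ⧸ Ideal.span {f} ^ n)
      ((A ⧸ Ideal.span {f} ^ n) ⊗[A] M)) :
    (∀ x : M, (∃ n : ℕ, f ^ n • x = 0) → f ^ N • x = 0) ∧
      ∀ k : ℕ, N ≤ k →
        Submodule.torsionBy A M (f ^ k) =
          (Submodule.torsionBy A A (f ^ N) : Ideal A) • (⊤ : Submodule A M) := by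
  set I : Ideal A := Ideal.span {f} with hI
  set J : Ideal A := Submodule.torsionBy A A (f ^ N) with hJdef
  -- elements of J • ⊤ are killed by f^N
  have hJkill : ∀ y : M, y ∈ (J • ⊤ : Submodule A M) → f ^ N • y = 0 := by
    intro y hy
    refine Submodule.smul_induction_on hy ?_ ?_
    · intro a ha m _
      rw [smul_smul]
      have : f ^ N * a = 0 := by
        have := (Submodule.mem_torsionBy_iff _ _).mp ha
        simpa [smul_eq_mul] using this
      rw [this, zero_smul]
    · intro y z hy hz
      rw [smul_add, hy, hz, add_zero]
  -- the key lemma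
  have key : ∀ k m : ℕ, N ≤ k → ∀ x : M, f ^ k • x = 0 →
      x ∈ (J • ⊤ ⊔ Ideal.span {f ^ m} • ⊤ : Submodule A M) := by
    intro k m hk x hx
    set n := k + m with hn
    haveI := hflat n
    set R := A ⧸ I ^ n with hR
    set mk : A →+* R := Ideal.Quotient.mk (I ^ n) with hmk
    set K : Ideal A := J ⊔ Ideal.span {f ^ m} with hK
    -- compute the torsion ideal of (mk (f^k)) in R
    have hann : Submodule.torsionBy R R (mk (f ^ k)) = K.map mk := by
      ext y
      obtain ⟨a, rfl⟩ := Ideal.Quotient.mk_surjective (I := I ^ n) y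
      rw [Submodule.mem_torsionBy_iff]
      constructor
      · intro h
        have : mk (f ^ k * a) = 0 := by
          rw [map_mul]
          simpa [smul_eq_mul] using h
        rw [Ideal.Quotient.eq_zero_iff_mem] at this
        rw [hI, Ideal.span_singleton_pow, Ideal.mem_span_singleton'] at this
        obtain ⟨b, hb⟩ := this
        have h0 : f ^ k * (a - f ^ m * b) = 0 := by
          have : f ^ k * (f ^ m * b) = b * f ^ n := by rw [hn, pow_add]; ring
          rw [mul_sub, this, hb, sub_self]
        have h1 : f ^ N * (a - f ^ m * b) = 0 := hA _ ⟨k, h0⟩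
        have hmem : a - f ^ m * b ∈ J := by
          rw [hJdef, Submodule.mem_torsionBy_iff, smul_eq_mul]; exact h1
        have : a = (a - f ^ m * b) + f ^ m * b := by ring
        rw [this]
        apply Ideal.mem_map_of_mem
        refine Submodule.add_mem _ (Ideal.mem_sup_left hmem) (Ideal.mem_sup_right ?_)
        rw [Ideal.mem_span_singleton']
        exact ⟨b, mul_comm b (f ^ m)⟩
      · intro h
        rw [Ideal.mem_map_iff_of_surjective mk Ideal.Quotient.mk_surjective] at h
        obtain ⟨c, hc, hcm⟩ := h
        rw [hK, Submodule.mem_sup] at hc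
        obtain ⟨j, hj, s, hs, rfl⟩ := hc
        rw [Ideal.mem_span_singleton'] at hs
        obtain ⟨b, rfl⟩ := hs
        rw [← hcm, smul_eq_mul, ← map_mul]
        have hj0 : f ^ N * j = 0 := by
          have := (Submodule.mem_torsionBy_iff _ _).mp hj
          simpa [smul_eq_mul] using this
        have : f ^ k * (j + b * f ^ m) = b * f ^ n := by
          have hk' : f ^ k * j = f ^ (k - N) * (f ^ N * j) := by
            rw [← mul_assoc, ← pow_add]
            congr 2
            omega
          rw [mul_add, hk', hj0, mul_zero, zero_add, hn, pow_add]
          ring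
        rw [this]
        rw [Ideal.Quotient.eq_zero_iff_mem]
        rw [hI, Ideal.span_singleton_pow, Ideal.mem_span_singleton']
        exact ⟨b, rfl⟩
    -- the torsion in P
    set P := R ⊗[A] M with hP
    set x' : P := (1 : R) ⊗ₜ[A] x with hx'
    have hx'tor : x' ∈ Submodule.torsionBy R P (mk (f ^ k)) := by
      rw [Submodule.mem_torsionBy_iff]
      have h1 : mk (f ^ k) = algebraMap A R (f ^ k) := rfl
      rw [hx', h1, algebraMap_smul, ← TensorProduct.tmul_smul, hx, TensorProduct.tmul_zero]
    rw [flat_torsionBy_eq P (mk (f ^ k)), hann] at hx'tor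
    -- convert to A-submodule smul
    have hconv : x' ∈ (K • ⊤ : Submodule A P) := by
      have : ∀ p ∈ ((K.map mk) • (⊤ : Submodule R P) : Submodule R P),
          p ∈ (K • ⊤ : Submodule A P) := by
        intro p hp
        refine Submodule.smul_induction_on hp ?_ ?_
        · intro r hr q _
          rw [Ideal.mem_map_iff_of_surjective mk Ideal.Quotient.mk_surjective] at hr
          obtain ⟨a, ha, rfl⟩ := hr
          have : (mk a) • q = a • q := by
            have h1 : mk a = algebraMap A R a := rfl
            rw [h1, algebraMap_smul]
          rw [this]
          exact Submodule.smul_mem_smul ha trivial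
        · intro p q hp hq
          exact Submodule.add_mem _ hp hq
      exact this x' hx'tor
    -- push through the equivalence to M ⧸ I^n • ⊤
    set e := TensorProduct.quotTensorEquivQuotSMul M (I ^ n) with he
    have hex : e x' = Submodule.Quotient.mk x := by
      have h1 : (1 : R) = Ideal.Quotient.mk (I ^ n) 1 := rfl
      rw [hx', h1, he, TensorProduct.quotTensorEquivQuotSMul_mk_tmul, one_smul]
    have hmem : Submodule.Quotient.mk (p := (I ^ n • ⊤ : Submodule A M)) x ∈
        (K • ⊤ : Submodule A (M ⧸ (I ^ n • ⊤ : Submodule A M))) := by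
      rw [← hex]
      have : (K • ⊤ : Submodule A P).map e.toLinearMap ≤
          (K • ⊤ : Submodule A (M ⧸ (I ^ n • ⊤ : Submodule A M))) := by
        rw [Submodule.map_smul'']
        exact Submodule.smul_mono le_rfl le_top
      exact this ⟨x', hconv, rfl⟩
    -- pull back along mkQ
    have hmap : (K • ⊤ : Submodule A (M ⧸ (I ^ n • ⊤ : Submodule A M))) =
        ((K • ⊤ : Submodule A M)).map (I ^ n • ⊤ : Submodule A M).mkQ := by
      rw [Submodule.map_smul'', Submodule.map_top, Submodule.range_mkQ]
    rw [hmap] at hmem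
    obtain ⟨y, hy, hyx⟩ := hmem
    have hdiff : x - y ∈ (I ^ n • ⊤ : Submodule A M) := by
      rw [Submodule.mkQ_apply] at hyx
      have h := (Submodule.Quotient.eq _).mp hyx
      simpa using Submodule.neg_mem _ h
    have hInm : (I ^ n • ⊤ : Submodule A M) ≤ Ideal.span {f ^ m} • ⊤ := by
      apply Submodule.smul_mono _ le_rfl
      rw [hI, Ideal.span_singleton_pow]
      rw [Ideal.span_singleton_le_span_singleton]
      exact ⟨f ^ k, by rw [hn, pow_add]; ring⟩
    have hxy : x = y + (x - y) := by abel
    rw [hK, Submodule.sup_smul] at hy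
    rw [hxy]
    exact Submodule.add_mem _ hy (Submodule.mem_sup_right (hInm hdiff))
  -- Part 1
  have part1 : ∀ x : M, (∃ n : ℕ, f ^ n • x = 0) → f ^ N • x = 0 := by
    intro x ⟨n, hn⟩
    set k := max n N with hk
    have hkx : f ^ k • x = 0 := by
      have : f ^ k = f ^ (k - n) * f ^ n := by rw [← pow_add]; congr 1; omega
      rw [this, mul_smul, hn, smul_zero]
    have : f ^ N • x ∈ (⨅ m : ℕ, (I ^ m • ⊤ : Submodule A M)) := by
      rw [Submodule.mem_iInf]
      intro m
      have hx := key k m (le_max_right n N) x hkx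
      rw [Submodule.mem_sup] at hx
      obtain ⟨y, hy, z, hz, rfl⟩ := hx
      rw [smul_add, hJkill y hy, zero_add]
      have : (Ideal.span {f ^ m} • ⊤ : Submodule A M) = I ^ m • ⊤ := by
        rw [hI, Ideal.span_singleton_pow]
      rw [← this]
      exact Submodule.smul_mem _ _ hz
    rw [hsep] at this
    simpa using this
  refine ⟨part1, ?_⟩
  -- Part 2
  intro k hk
  apply le_antisymm
  · intro x hx
    rw [Submodule.mem_torsionBy_iff] at hx
    have hx' := key k k hk x hx
    rw [Submodule.mem_sup] at hx'
    obtain ⟨y, hy, z, hz, rfl⟩ := hx'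
    -- z = f^k • w for some w
    have hzw : ∃ w : M, z = f ^ k • w := by
      refine Submodule.smul_induction_on hz ?_ ?_
      · intro a ha m _
        rw [Ideal.mem_span_singleton'] at ha
        obtain ⟨c, rfl⟩ := ha
        exact ⟨c • m, by rw [mul_smul, smul_comm]⟩
      · rintro p q ⟨w1, rfl⟩ ⟨w2, rfl⟩
        exact ⟨w1 + w2, by rw [smul_add]⟩
    obtain ⟨w, rfl⟩ := hzw
    have hky : f ^ k • y = 0 := by
      have : f ^ k = f ^ (k - N) * f ^ N := by rw [← pow_add]; congr 1; omega
      rw [this, mul_smul, hJkill y hy, smul_zero]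
    have hw : f ^ (k + k) • w = 0 := by
      have := hx
      rw [smul_add, hky, zero_add, smul_smul, ← pow_add] at this
      exact this
    have hNw : f ^ N • w = 0 := part1 w ⟨k + k, hw⟩
    have : f ^ k • w = 0 := by
      have h1 : f ^ k = f ^ (k - N) * f ^ N := by rw [← pow_add]; congr 1; omega
      rw [h1, mul_smul, hNw, smul_zero]
    rw [this, add_zero]
    exact hy
  · apply Submodule.smul_le.mpr
    intro a ha m _
    rw [Submodule.mem_torsionBy_iff, smul_smul]
    have han : f ^ N * a = 0 := by
      have := (Submodule.mem_torsionBy_iff _ _).mp ha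
      simpa [smul_eq_mul] using this
    have : f ^ k * a = 0 := by
      have h1 : f ^ k = f ^ (k - N) * f ^ N := by rw [← pow_add]; congr 1; omega
      rw [h1, mul_assoc, han, mul_zero]
    rw [this, zero_smul]
end

section
/- Let A be a ring with f ∈ A and suppose A has f^∞-torsion bounded by N. If M is an A-module which is completely flat for the f-adic topology (M/fM flat over A/fA and Tor_k^A(M, A/fA) = 0 for k ≥ 1), then M also has f^∞-torsion bounded by N. -/
/-!
Let `T = Ann(f^N)`; by hypothesis it is the whole `f^∞`-torsion of `A`, so `f b ∈ T` implies
`b ∈ T`. Resolving `A/f` by `⋯ → A --f--> A`, the vanishing of `Tor₁(M, A/f)` says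
`M[f] ⊆ A[f] M ⊆ T M`. Flatness of `M/fM` over `A/f`, through the equational criterion lifted
to `A`, shows that `f x ∈ T M` forces `x ∈ T M`. Hence every `f^∞`-torsion element of `M` lies
in `T M`, which `f^N` kills.
-/

open scoped TensorProduct Pointwise
open CategoryTheory CategoryTheory.Limits CategoryTheory.MonoidalCategory

universe u

namespace CategoryTheory.ProjectiveResolution

lemma exactAt_tensor_of_isZero_tor {C : Type*} [Category* C] [MonoidalCategory C] [Abelian C]
    [MonoidalPreadditive C] [HasProjectiveResolutions C] {X Z : C} (P : ProjectiveResolution Z)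
    {n : ℕ} (h : IsZero (((Tor C n).obj X).obj Z)) :
    ((((tensoringLeft C).obj X).mapHomologicalComplex _).obj P.complex).ExactAt n := by
  rw [HomologicalComplex.exactAt_iff_isZero_homology]
  exact h.of_iso (P.isoLeftDerivedObj _ n).symm

variable {C : Type*} [Category* C] [Abelian C] [EnoughProjectives C]

noncomputable abbrev syzygyStep {X₀ X₁ : C} (g : X₁ ⟶ X₀) :
    Σ' (X₂ : C) (d : X₂ ⟶ X₁), d ≫ g = 0 :=
  ⟨_, Projective.d g,
    (Category.assoc _ _ _).trans ((congrArg _ (kernel.condition g)).trans comp_zero)⟩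

noncomputable def syzygyComplex {P₀ P₁ : C} (d : P₁ ⟶ P₀) : ChainComplex C ℕ :=
  ChainComplex.mk' P₀ P₁ d (fun g => syzygyStep g)

@[simp]
lemma syzygyComplex_d_one_zero {P₀ P₁ : C} (d : P₁ ⟶ P₀) :
    (syzygyComplex d).d 1 0 = d := by
  simp [syzygyComplex]

lemma syzygyComplex_exactAt_succ {P₀ P₁ : C} (d : P₁ ⟶ P₀) (n : ℕ) :
    (syzygyComplex d).ExactAt (n + 1) := by
  rw [HomologicalComplex.exactAt_iff' _ (n + 1 + 1) (n + 1) n (by simp) (by simp)]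
  have h := exact_d_f ((syzygyComplex d).d (n + 1) n)
  unfold syzygyComplex at h ⊢
  refine ShortComplex.exact_of_iso ?_ h
  refine ShortComplex.isoMk (ChainComplex.mk'XIso _ _ _ (fun g => syzygyStep g) n).symm
    (Iso.refl _) (Iso.refl _) ?_ ?_
  · dsimp [HomologicalComplex.sc', HomologicalComplex.shortComplexFunctor']
    rw [ChainComplex.mk'_d, Iso.inv_hom_id_assoc, Category.comp_id]
  · exact (Category.id_comp _).trans (Category.comp_id _).symm

instance {P₀ P₁ : C} [Projective P₀] [Projective P₁] (d : P₁ ⟶ P₀) (n : ℕ) :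
    Projective ((syzygyComplex d).X n) := by
  obtain (_ | _ | _ | n) := n <;> first | assumption | apply Projective.projective_over

noncomputable def ofExact {Z P₀ P₁ : C} [Projective P₀] [Projective P₁] (d : P₁ ⟶ P₀)
    (π : P₀ ⟶ Z) [Epi π] (w : d ≫ π = 0) (h : (ShortComplex.mk d π w).Exact) :
    ProjectiveResolution Z where
  complex := syzygyComplex d
  π := (ChainComplex.toSingle₀Equiv _ _).symm ⟨π, by rw [syzygyComplex_d_one_zero]; exact w⟩
  quasiIso := ⟨fun n => by
    cases n
    · rw [ChainComplex.quasiIsoAt₀_iff, ShortComplex.quasiIso_iff_of_zeros']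
      · refine (ShortComplex.exact_and_epi_g_iff_of_iso ?_).2 ⟨h, inferInstance⟩
        refine ShortComplex.isoMk (Iso.refl _) (Iso.refl _) (Iso.refl _) ?_ ?_
        · erw [Category.id_comp, Category.comp_id]
          exact (syzygyComplex_d_one_zero d).symm
        · erw [Category.id_comp, Category.comp_id]
          exact (ChainComplex.toSingle₀Equiv_symm_apply_f_zero (C := syzygyComplex d) π _).symm
      all_goals rfl
    · rw [quasiIsoAt_iff_exactAt']
      · apply syzygyComplex_exactAt_succ
      · apply ChainComplex.exactAt_succ_single_obj⟩

@[simp]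
lemma ofExact_complex_d_one_zero {Z P₀ P₁ : C} [Projective P₀] [Projective P₁]
    (d : P₁ ⟶ P₀) (π : P₀ ⟶ Z) [Epi π] (w : d ≫ π = 0)
    (h : (ShortComplex.mk d π w).Exact) :
    (ofExact d π w h).complex.d 1 0 = d :=
  syzygyComplex_d_one_zero d

end CategoryTheory.ProjectiveResolution

section

variable {A : Type u} [CommRing A] (f : A)

lemma exact_mulLeft_mkQ_span_singleton :
    (ShortComplex.mk (ModuleCat.ofHom (LinearMap.mulLeft A f))
      (ModuleCat.ofHom (Ideal.span {f}).mkQ) (by ext; simp)).Exact := by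
  rw [ShortComplex.moduleCat_exact_iff]
  intro (x : A) (hx : Submodule.Quotient.mk x = 0)
  obtain ⟨a, rfl⟩ := Ideal.mem_span_singleton'.mp ((Submodule.Quotient.mk_eq_zero _).mp hx)
  exact ⟨a, mul_comm f a⟩

instance {M : Type u} [AddCommGroup M] [Module A M] (p : Submodule A M) :
    Epi (ModuleCat.ofHom p.mkQ) :=
  (ModuleCat.epi_iff_surjective _).mpr p.mkQ_surjective

noncomputable def quotSpanSingletonResolution :
    ProjectiveResolution (ModuleCat.of A (A ⧸ Ideal.span {f})) :=
  ProjectiveResolution.ofExact _ _ _ (exact_mulLeft_mkQ_span_singleton f)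

@[simp]
lemma quotSpanSingletonResolution_d_one_zero :
    (quotSpanSingletonResolution f).complex.d 1 0 = ModuleCat.ofHom (LinearMap.mulLeft A f) :=
  ProjectiveResolution.ofExact_complex_d_one_zero ..

lemma rid_lTensor_mem_ideal_smul_top {M N : Type*} [AddCommGroup M] [Module A M]
    [AddCommGroup N] [Module A N] {I : Ideal A} {g : N →ₗ[A] A} (hg : ∀ n, g n ∈ I)
    (w : M ⊗[A] N) : TensorProduct.rid A M (g.lTensor M w) ∈ I • (⊤ : Submodule A M) := by
  induction w using TensorProduct.induction_on with
  | zero => simp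
  | tmul m n => simpa using Submodule.smul_mem_smul (hg n) Submodule.mem_top
  | add w w' hw hw' => simpa using add_mem hw hw'

theorem torsionBy_le_smul_top_of_isZero_tor_one {M : Type u} [AddCommGroup M] [Module A M]
    (h : IsZero (((Tor (ModuleCat A) 1).obj (ModuleCat.of A M)).obj
      (ModuleCat.of A (A ⧸ Ideal.span {f})))) :
    Submodule.torsionBy A M f ≤ Submodule.torsionBy A A f • ⊤ := by
  intro x hx
  set P := quotSpanSingletonResolution f
  have hexact := P.exactAt_tensor_of_isZero_tor h
  rw [HomologicalComplex.exactAt_iff' _ 2 1 0 (by simp) (by simp),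
    ShortComplex.moduleCat_exact_iff] at hexact
  obtain ⟨y, hy⟩ := hexact (x ⊗ₜ[A] (1 : A) : M ⊗[A] A) (by
    change x ⊗ₜ[A] (f * 1 : A) = 0
    rw [← smul_eq_mul, ← TensorProduct.smul_tmul, (Submodule.mem_torsionBy_iff _ _).mp hx,
      TensorProduct.zero_tmul])
  let g : P.complex.X 2 →ₗ[A] A := (P.complex.d 2 1).hom
  have hg : ∀ z, g z ∈ Submodule.torsionBy A A f := fun z => by
    have hdd := P.complex.d_comp_d 2 1 0
    rw [quotSpanSingletonResolution_d_one_zero] at hdd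
    exact congr($(hdd).hom z)
  have hx_mem := rid_lTensor_mem_ideal_smul_top (M := M) hg y
  rw [show g.lTensor M y = x ⊗ₜ 1 from hy] at hx_mem
  simpa using hx_mem

end

section

variable {A M : Type*} [CommRing A] [AddCommGroup M] [Module A M]

lemma Submodule.exists_fin_sum_of_mem_ideal_smul_top {I : Ideal A} {x : M}
    (hx : x ∈ I • (⊤ : Submodule A M)) :
    ∃ (n : ℕ) (t : Fin n → A) (m : Fin n → M), (∀ i, t i ∈ I) ∧ ∑ i, t i • m i = x := by
  rw [← Submodule.span_univ, Submodule.mem_smul_span, Submodule.mem_span_set'] at hx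
  obtain ⟨n, c, g, rfl⟩ := hx
  choose t ht m _ hg using fun i => Set.mem_smul.mp (g i).2
  refine ⟨n, fun i => c i * t i, m, fun i => I.mul_mem_left _ (ht i), ?_⟩
  simp [mul_smul, hg]

lemma Module.Flat.quotient_smul_top (J : Ideal A) [Module.Flat (A ⧸ J) ((A ⧸ J) ⊗[A] M)] :
    Module.Flat (A ⧸ J) (M ⧸ J • (⊤ : Submodule A M)) :=
  .of_linearEquiv ((TensorProduct.quotTensorEquivQuotSMul M J).symm.extendScalarsOfSurjective
    Ideal.Quotient.mk_surjective)

lemma Module.Flat.exists_lift_of_sum_smul_mem_ideal_smul_top {J : Ideal A}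
    [Module.Flat (A ⧸ J) (M ⧸ J • (⊤ : Submodule A M))] {ι : Type*} [Fintype ι]
    {t : ι → A} {m : ι → M} (h : ∑ i, t i • m i ∈ J • (⊤ : Submodule A M)) :
    ∃ (k : ℕ) (c : ι → Fin k → A) (u : Fin k → M),
      (∀ i, m i - ∑ j, c i j • u j ∈ J • (⊤ : Submodule A M)) ∧
        ∀ j, ∑ i, t i * c i j ∈ J := by
  have hrel : ∑ i, Ideal.Quotient.mk J (t i) • (J • ⊤ : Submodule A M).mkQ (m i) = 0 := by
    have h0 : (J • ⊤ : Submodule A M).mkQ (∑ i, t i • m i) = 0 :=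
      (Submodule.Quotient.mk_eq_zero _).mpr h
    simpa [map_sum] using h0
  obtain ⟨k, a, y, hy, ha⟩ := Module.Flat.isTrivialRelation_of_sum_smul_eq_zero hrel
  choose c hc using fun i j => Ideal.Quotient.mk_surjective (a i j)
  choose u hu using fun j => Submodule.Quotient.mk_surjective _ (y j)
  refine ⟨k, c, u, fun i => ?_, fun j => ?_⟩
  · rw [← Submodule.Quotient.eq]
    simpa [← hc, ← hu, Module.Quotient.mk_smul_mk, ← Submodule.mkQ_apply, map_sum] using hy i
  · rw [← Ideal.Quotient.eq_zero_iff_mem]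
    simpa [← hc] using ha j

theorem mem_smul_top_of_smul_mem_smul_top {f : A} {T : Ideal A}
    [Module.Flat (A ⧸ Ideal.span {f}) (M ⧸ Ideal.span {f} • (⊤ : Submodule A M))]
    (hT : ∀ b, f * b ∈ T → b ∈ T) (htors : Submodule.torsionBy A M f ≤ T • ⊤) {x : M}
    (hx : f • x ∈ T • (⊤ : Submodule A M)) : x ∈ T • (⊤ : Submodule A M) := by
  obtain ⟨n, t, m, ht, hsum⟩ := Submodule.exists_fin_sum_of_mem_ideal_smul_top hx
  obtain ⟨k, c, u, hm, hc⟩ := Module.Flat.exists_lift_of_sum_smul_mem_ideal_smul_top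
    (J := Ideal.span {f}) (t := t) (m := m)
    (hsum ▸ Submodule.smul_mem_smul (Ideal.mem_span_singleton_self f) Submodule.mem_top)
  simp only [Submodule.ideal_span_singleton_smul, Submodule.mem_smul_pointwise_iff_exists,
    Submodule.mem_top, true_and] at hm
  choose v hv using hm
  choose b hb using fun j => Ideal.mem_span_singleton'.mp (hc j)
  have hbT : ∀ j, b j ∈ T := fun j => hT _ <| by
    rw [mul_comm, hb j]
    exact Ideal.sum_mem _ fun i _ => T.mul_mem_right _ (ht i)
  set y := ∑ j, b j • u j + ∑ i, t i • v i
  have hy : y ∈ T • (⊤ : Submodule A M) :=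
    add_mem (Submodule.sum_mem _ fun j _ => Submodule.smul_mem_smul (hbT j) Submodule.mem_top)
      (Submodule.sum_mem _ fun i _ => Submodule.smul_mem_smul (ht i) Submodule.mem_top)
  have hfy : f • x = f • y := by
    calc f • x = ∑ i, t i • (∑ j, c i j • u j + f • v i) := by
          simp only [hv, add_sub_cancel, hsum]
      _ = ∑ j, (∑ i, t i * c i j) • u j + f • ∑ i, t i • v i := by
          simp only [smul_add, Finset.smul_sum, Finset.sum_add_distrib, smul_smul,
            Finset.sum_smul]
          rw [Finset.sum_comm]
          simp only [mul_comm]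
      _ = f • y := by
          simp only [← hb, mul_comm (b _) f, mul_smul, Finset.smul_sum, smul_add, y]
  have hxy : x - y ∈ T • (⊤ : Submodule A M) :=
    htors ((Submodule.mem_torsionBy_iff _ _).mpr (by rw [smul_sub, hfy, sub_self]))
  simpa using add_mem hxy hy

lemma Submodule.mem_of_pow_smul_eq_zero {f : A} {S : Submodule A M}
    (hS : ∀ x, f • x ∈ S → x ∈ S) {x : M} {n : ℕ} (h : f ^ n • x = 0) : x ∈ S := by
  induction n generalizing x with
  | zero => simp_all
  | succ n ih => exact hS x (ih (by rwa [← mul_smul, ← pow_succ]))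

lemma Submodule.torsionBy_smul_top_le_torsionBy (a : A) :
    torsionBy A A a • (⊤ : Submodule A M) ≤ torsionBy A M a :=
  Submodule.smul_le.mpr fun t ht m _ => by
    rw [mem_torsionBy_iff, smul_smul, ← smul_eq_mul, (mem_torsionBy_iff _ _).mp ht, zero_smul]

end

/-- If `A` has `f^∞`-torsion bounded by `N` and `M` is completely flat for the `f`-adic
topology (`M/fM` flat over `A/fA` and `Tor_k^A(M, A/fA) = 0` for `k ≥ 1`), then `M`
also has `f^∞`-torsion bounded by `N`. -/
theorem stmt5 (A : Type) [CommRing A] (f : A) (N : ℕ)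
    (M : Type) [AddCommGroup M] [Module A M]
    (hA : ∀ a : A, (∃ n : ℕ, f ^ n * a = 0) → f ^ N * a = 0)
    (hflat : Module.Flat (A ⧸ Ideal.span {f}) ((A ⧸ Ideal.span {f}) ⊗[A] M))
    (htor : ∀ k : ℕ, 1 ≤ k →
      IsZero (((Tor (ModuleCat A) k).obj (ModuleCat.of A M)).obj
        (ModuleCat.of A (A ⧸ Ideal.span {f})))) :
    ∀ x : M, (∃ n : ℕ, f ^ n • x = 0) → f ^ N • x = 0 := by
  set T := Submodule.torsionBy A A (f ^ N)
  have hfT : Submodule.torsionBy A A f ≤ T := fun a ha => hA a ⟨1, by simpa using ha⟩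
  have hT : ∀ b, f * b ∈ T → b ∈ T := fun b hb =>
    hA b ⟨N + 1, by rw [pow_succ, mul_assoc]; exact hb⟩
  have htors : Submodule.torsionBy A M f ≤ T • ⊤ :=
    (torsionBy_le_smul_top_of_isZero_tor_one f (htor 1 le_rfl)).trans
      (Submodule.smul_mono_left hfT)
  have := Module.Flat.quotient_smul_top (M := M) (Ideal.span {f})
  rintro x ⟨n, hn⟩
  exact Submodule.torsionBy_smul_top_le_torsionBy _
    (Submodule.mem_of_pow_smul_eq_zero (fun _ => mem_smul_top_of_smul_mem_smul_top hT htors) hn)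
end

section
/- Let A' → A be a formally étale morphism of δ-rings and B a classically p-adically complete ring. If φ : A → B is a ring homomorphism such that the composite A' → A → B is a morphism of δ-rings, then φ itself is a morphism of δ-rings. -/
/-!
The defect `d = φ ∘ δ - δ ∘ φ : A → B` is additive, vanishes on the image of `A'`, and satisfies
`d(xy) = F(φ x) d(y) + F(φ y) d(x) + p d(x) d(y)`, where `F = (·)^p + p δ` is the Frobenius lift
of `B`. If `d` takes values in `(p)^n`, the last term lies in `(p)^(n+1)`, so `d` modulo
`(p)^(n+1)` is an `A'`-derivation of `A` (acting through `F ∘ φ`); as `A` is formally unramified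
over `A'` it vanishes. Hence `d` lands in every `(p)^n`, and is zero since `B` is `p`-adically
separated.
-/

/-- A `δ`-ring structure (for the prime `p`): an operation `δ` with `δ(1) = 0`,
`δ(x+y) = δ(x) + δ(y) − Σ_{0<i<p} (1/p)·binom(p,i)·x^i·y^(p−i)` and
`δ(xy) = x^p δ(y) + y^p δ(x) + p δ(x) δ(y)`. -/
structure DeltaStructure (R : Type*) [CommRing R] (p : ℕ) where
  δ : R → R
  delta_one : δ 1 = 0
  delta_add : ∀ x y : R, δ (x + y) =
    δ x + δ y - ∑ i ∈ Finset.Ioo 0 p, ((p.choose i / p : ℕ) : R) * x ^ i * y ^ (p - i)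
  delta_mul : ∀ x y : R, δ (x * y) =
    x ^ p * δ y + y ^ p * δ x + (p : R) * δ x * δ y

namespace DeltaStructure

variable {R : Type*} [CommRing R] {p : ℕ}

theorem delta_zero (D : DeltaStructure R p) : D.δ 0 = 0 := by
  have h := D.delta_add 0 0
  rw [Finset.sum_eq_zero fun i hi => by
    rw [zero_pow (Finset.mem_Ioo.mp hi).1.ne', mul_zero, zero_mul]] at h
  simpa using h

def frob (hp : p.Prime) (D : DeltaStructure R p) : R →+* R where
  toFun x := x ^ p + p * D.δ x
  map_one' := by simp [D.delta_one]
  map_zero' := by simp [D.delta_zero, hp.ne_zero]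
  map_mul' x y := by
    simp only [D.delta_mul]
    ring
  map_add' x y := by
    have hsum : ∑ k ∈ Finset.Ioo 0 p, x ^ k * y ^ (p - k) * ((p.choose k / p : ℕ) : R) =
        ∑ k ∈ Finset.Ioo 0 p, ((p.choose k / p : ℕ) : R) * x ^ k * y ^ (p - k) :=
      Finset.sum_congr rfl fun _ _ => by ring
    simp only [D.delta_add, add_pow_prime_eq' hp, hsum]
    ring

theorem frob_apply (hp : p.Prime) (D : DeltaStructure R p) (x : R) :
    D.frob hp x = x ^ p + p * D.δ x := rfl

end DeltaStructure

/-- Such a `d` is an `R`-derivation into `C` viewed as an `A`-module through `f`, so it factors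
through `Ω[A⁄R] = 0`. -/
theorem Algebra.FormallyUnramified.eq_zero_of_leibniz {R A C : Type*} [CommRing R] [CommRing A]
    [CommRing C] [Algebra R A] [Algebra.FormallyUnramified R A] (f : A →+* C) (d : A →+ C)
    (hleib : ∀ x y, d (x * y) = f x * d y + f y * d x) (hR : ∀ r, d (algebraMap R A r) = 0)
    (x : A) : d x = 0 := by
  let _ : Algebra A C := f.toAlgebra
  let _ : Algebra R C := (f.comp (algebraMap R A)).toAlgebra
  have : IsScalarTower R A C := IsScalarTower.of_algebraMap_eq fun _ => rfl
  let D : Derivation R A C :=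
    { toFun := d
      map_add' := d.map_add
      map_smul' := fun r x => by
        simp only [Algebra.smul_def, hleib, hR, mul_zero, add_zero, RingHom.id_apply]
        rfl
      map_one_eq_zero' := by simpa using hR 1
      leibniz' := hleib }
  change D x = 0
  rw [← D.liftKaehlerDifferential_comp_D, Subsingleton.elim (KaehlerDifferential.D R A x) 0,
    map_zero]

section DeltaDefect

variable {p : ℕ} {A B : Type*} [CommRing A] [CommRing B]
  (DA : DeltaStructure A p) (DB : DeltaStructure B p) (φ : A →+* B)

def deltaDefect : A →+ B :=
  AddMonoidHom.mk' (fun x => φ (DA.δ x) - DB.δ (φ x)) fun x y => by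
    simp only [DA.delta_add, DB.delta_add, map_add, map_sub, map_sum, map_mul, map_pow,
      map_natCast]
    ring

theorem deltaDefect_apply (x : A) : deltaDefect DA DB φ x = φ (DA.δ x) - DB.δ (φ x) := rfl

theorem deltaDefect_mul (hp : p.Prime) (x y : A) :
    deltaDefect DA DB φ (x * y) =
      DB.frob hp (φ x) * deltaDefect DA DB φ y + DB.frob hp (φ y) * deltaDefect DA DB φ x +
        p * deltaDefect DA DB φ x * deltaDefect DA DB φ y := by
  simp only [deltaDefect_apply, DeltaStructure.frob_apply, DA.delta_mul, DB.delta_mul, map_add,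
    map_mul, map_pow, map_natCast]
  ring

theorem deltaDefect_mem_pow (hp : p.Prime) {A' : Type*} [CommRing A'] [Algebra A' A]
    [Algebra.FormallyUnramified A' A] (DA' : DeltaStructure A' p)
    (hA'A : ∀ a, algebraMap A' A (DA'.δ a) = DA.δ (algebraMap A' A a))
    (hcomp : ∀ a, φ (algebraMap A' A (DA'.δ a)) = DB.δ (φ (algebraMap A' A a)))
    {I : Ideal B} (hpI : (p : B) ∈ I) (n : ℕ) (x : A) : deltaDefect DA DB φ x ∈ I ^ n := by
  induction n generalizing x with
  | zero => simp
  | succ n ih =>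
    let q := Ideal.Quotient.mk (I ^ (n + 1))
    rw [← Ideal.Quotient.eq_zero_iff_mem]
    refine Algebra.FormallyUnramified.eq_zero_of_leibniz (R := A')
      (q.comp ((DB.frob hp).comp φ)) ((q : B →+ B ⧸ I ^ (n + 1)).comp (deltaDefect DA DB φ))
      (fun x y => ?_) (fun a => ?_) x
    · have hquad : q (p * deltaDefect DA DB φ x * deltaDefect DA DB φ y) = 0 := by
        rw [Ideal.Quotient.eq_zero_iff_mem, mul_assoc, pow_succ']
        exact Ideal.mul_mem_mul hpI (Ideal.mul_mem_left _ _ (ih y))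
      change q (deltaDefect DA DB φ (x * y)) =
        q (DB.frob hp (φ x)) * q (deltaDefect DA DB φ y) +
          q (DB.frob hp (φ y)) * q (deltaDefect DA DB φ x)
      rw [deltaDefect_mul DA DB φ hp, map_add, hquad, add_zero, map_add, map_mul, map_mul]
    · simp [deltaDefect_apply, ← hA'A, hcomp]

end DeltaDefect

universe u

/-- If `A' → A` is a formally étale morphism of `δ`-rings and `B` is a classically
`p`-adically complete ring with a `δ`-structure, then a ring homomorphism `φ : A → B`
is a morphism of `δ`-rings as soon as the composite `A' → A → B` is. -/
theorem stmt11 (p : ℕ) [Fact p.Prime]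
    (A' A B : Type u) [CommRing A'] [CommRing A] [CommRing B]
    [Algebra A' A] [Algebra.FormallyEtale A' A]
    (DA' : DeltaStructure A' p) (DA : DeltaStructure A p) (DB : DeltaStructure B p)
    (hA'A : ∀ a : A', algebraMap A' A (DA'.δ a) = DA.δ (algebraMap A' A a))
    (hB : IsAdicComplete (Ideal.span {(p : B)}) B)
    (φ : A →+* B)
    (hcomp : ∀ a : A', φ (algebraMap A' A (DA'.δ a)) = DB.δ (φ (algebraMap A' A a))) :
    ∀ a : A, φ (DA.δ a) = DB.δ (φ a) := by
  have : IsHausdorff (Ideal.span {(p : B)}) B := hB.toIsHausdorff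
  refine congrFun (IsHausdorff.funext' (Ideal.span {(p : B)})
    (f := fun a => φ (DA.δ a)) (g := fun a => DB.δ (φ a)) fun n x => ?_)
  rw [Ideal.Quotient.eq, ← deltaDefect_apply DA DB φ]
  exact deltaDefect_mem_pow DA DB φ Fact.out DA' hA'A hcomp (Ideal.mem_span_singleton_self _) n x
end

section
/- Let R be a δ-ring in which p is topologically nilpotent and let d ∈ R be distinguished, i.e. δ(d) is a unit. If d = p·u for some u ∈ R, then u^p can be written as v(1 − f) with v a unit of R and f ≡ 0 mod p; in particular u is invertible modulo p. -/
/-- In a `δ`-ring `R` with `δ(p)` a unit, if `d` is distinguished (`δ(d)` a unit) and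
`d = p·u`, then `u^p = v(1 − f)` with `v` a unit and `f ≡ 0 mod p`; in particular `u`
is invertible modulo `p`. -/
theorem stmt12 (p : ℕ) [Fact p.Prime] (R : Type*) [CommRing R]
    (D : DeltaStructure R p) (hp : IsUnit (D.δ (p : R)))
    (d u : R) (hd : IsUnit (D.δ d)) (hdu : d = (p : R) * u) :
    ∃ v fl : R, IsUnit v ∧ (∃ a : R, fl = (p : R) * a) ∧
      u ^ p = v * (1 - fl) ∧
      IsUnit (Ideal.Quotient.mk (Ideal.span {(p : R)}) u) := by
  obtain ⟨vp, hvp⟩ := hp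
  obtain ⟨vd, hvd⟩ := hd
  have key : D.δ d = (p : R) ^ p * D.δ u + u ^ p * D.δ (p : R)
      + (p : R) * D.δ (p : R) * D.δ u := by
    rw [hdu, D.delta_mul]
  have inv1 : (↑vp⁻¹ : R) * ↑vp = 1 := by exact_mod_cast vp.inv_mul
  have inv2 : (↑vd⁻¹ : R) * ↑vd = 1 := by exact_mod_cast vd.inv_mul
  have hppos : 0 < p := (Fact.out : p.Prime).pos
  have hpow : (p : R) ^ p = (p : R) * (p : R) ^ (p - 1) := by
    have h := pow_succ' (p : R) (p - 1)
    rwa [Nat.sub_add_cancel hppos] at h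
  set a := D.δ d
  set b := D.δ u
  set c := D.δ (p : R)
  have h3 : u ^ p * c = a - (p : R) ^ p * b - (p : R) * c * b := by
    linear_combination -key
  have h4 : u ^ p = (↑vp⁻¹ : R) * (a - (p : R) ^ p * b - (p : R) * c * b) := by
    calc u ^ p = ((↑vp⁻¹ : R) * ↑vp) * u ^ p := by rw [inv1]; ring
    _ = (↑vp⁻¹ : R) * (u ^ p * c) := by rw [hvp]; ring
    _ = (↑vp⁻¹ : R) * (a - (p : R) ^ p * b - (p : R) * c * b) := by rw [h3]
  have h5 : (↑vd⁻¹ : R) * a = 1 := by rw [← hvd]; exact inv2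
  have hupow : u ^ p = ((↑vp⁻¹ : R) * a) *
      (1 - (p : R) * ((↑vd⁻¹ : R) * ((p : R) ^ (p - 1) * b + c * b))) := by
    linear_combination h4 + ((↑vp⁻¹ : R) * (p : R) * ((p : R) ^ (p - 1) * b + c * b)) * h5
      - (↑vp⁻¹ : R) * b * hpow
  refine ⟨(↑vp⁻¹ : R) * a,
    (p : R) * ((↑vd⁻¹ : R) * ((p : R) ^ (p - 1) * b + c * b)),
    (vp⁻¹.isUnit).mul (hvd ▸ vd.isUnit),
    ⟨(↑vd⁻¹ : R) * ((p : R) ^ (p - 1) * b + c * b), rfl⟩, hupow, ?_⟩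
  set Q := Ideal.Quotient.mk (Ideal.span {(p : R)})
  have hpzero : Q (p : R) = 0 := by
    rw [Ideal.Quotient.eq_zero_iff_mem]
    exact Ideal.subset_span rfl
  have h1 : Q u ^ p = Q ((↑vp⁻¹ : R) * a) := by
    rw [← map_pow, hupow]
    simp [map_mul, map_sub, hpzero]
  have h2 : IsUnit (Q u ^ p) := by
    rw [h1]
    exact ((vp⁻¹.isUnit).mul (hvd ▸ vd.isUnit)).map Q
  exact (isUnit_pow_iff hppos.ne').mp h2
end

section
/- Let q be an indeterminate, p a prime, and (p)_q = 1 + q + ... + q^{p−1} ∈ Z[q] the q-analog of p. In the local ring Z[q]_{(p,q−1)} equipped with the δ-structure determined by δ(q) = 0, the element (p)_q is distinguished, i.e. δ((p)_q) is a unit. -/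
/-- Auxiliary integer sequence: `auxc p n` is morally `(n - n^p)/p`. -/
def auxc (p : ℕ) : ℕ → ℤ
  | 0 => 0
  | n + 1 => auxc p n - ∑ i ∈ Finset.Ioo 0 p, ((p.choose i / p : ℕ) : ℤ) * (n : ℤ) ^ i

lemma auxc_mul (p : ℕ) (hp : p.Prime) : ∀ n : ℕ, (p : ℤ) * auxc p n = (n : ℤ) - (n : ℤ) ^ p := by
  intro n
  induction n with
  | zero => simp [auxc, hp.pos.ne']
  | succ n ih =>
    have hbin : ((n : ℤ) + 1) ^ p =
        ∑ i ∈ Finset.range (p + 1), (n : ℤ) ^ i * 1 ^ (p - i) * (p.choose i : ℤ) :=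
      add_pow _ _ _
    have hsplit : ∑ i ∈ Finset.range (p + 1), (n : ℤ) ^ i * 1 ^ (p - i) * (p.choose i : ℤ)
        = 1 + (∑ i ∈ Finset.Ioo 0 p, (p.choose i : ℤ) * (n : ℤ) ^ i) + (n : ℤ) ^ p := by
      have h1 : Finset.range (p + 1) = insert 0 (insert p (Finset.Ioo 0 p)) := by
        ext i
        simp only [Finset.mem_range, Finset.mem_insert, Finset.mem_Ioo]
        omega
      have h0mem : (0 : ℕ) ∉ insert p (Finset.Ioo 0 p) := by
        intro h
        rcases Finset.mem_insert.mp h with h | h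
        · exact hp.ne_zero h.symm
        · exact absurd (Finset.mem_Ioo.mp h).1 (lt_irrefl 0)
      have hpmem : p ∉ Finset.Ioo 0 p := by simp
      rw [h1, Finset.sum_insert h0mem, Finset.sum_insert hpmem]
      have hcong : ∑ i ∈ Finset.Ioo 0 p, (n : ℤ) ^ i * 1 ^ (p - i) * (p.choose i : ℤ)
          = ∑ i ∈ Finset.Ioo 0 p, (p.choose i : ℤ) * (n : ℤ) ^ i :=
        Finset.sum_congr rfl fun i _ => by ring
      rw [hcong]
      simp only [pow_zero, one_pow, one_mul, Nat.choose_zero_right, Nat.choose_self,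
        Nat.cast_one, mul_one, Nat.sub_self]
      ring
    have hch : ∀ i ∈ Finset.Ioo 0 p, (p : ℤ) * ((p.choose i / p : ℕ) : ℤ) = (p.choose i : ℤ) := by
      intro i hi
      simp only [Finset.mem_Ioo] at hi
      have hd : p ∣ p.choose i := hp.dvd_choose_self hi.1.ne' hi.2
      rw [← Nat.cast_mul, Nat.mul_div_cancel' hd]
    have hmulsum : (p : ℤ) * ∑ i ∈ Finset.Ioo 0 p, ((p.choose i / p : ℕ) : ℤ) * (n : ℤ) ^ i
        = ∑ i ∈ Finset.Ioo 0 p, (p.choose i : ℤ) * (n : ℤ) ^ i := by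
      rw [Finset.mul_sum]
      refine Finset.sum_congr rfl fun i hi => ?_
      rw [← mul_assoc, hch i hi]
    rw [auxc, mul_sub, ih, hmulsum]
    push_cast
    rw [hbin, hsplit]
    ring

lemma aux_distinguished (p : ℕ) (hp : p.Prime) {R : Type*} [CommRing R] [IsLocalRing R]
    (D : DeltaStructure R p) (q : R) (hq : D.δ q = 0)
    (hq1 : q - 1 ∈ IsLocalRing.maximalIdeal R)
    (hpm : (p : R) ∈ IsLocalRing.maximalIdeal R) :
    IsUnit (D.δ (∑ i ∈ Finset.range p, q ^ i)) := by
  set m := IsLocalRing.maximalIdeal R with hm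
  let π : R →+* R ⧸ m := Ideal.Quotient.mk m
  have hqm : π q = 1 := by
    have h0 : π (q - 1) = 0 := Ideal.Quotient.eq_zero_iff_mem.mpr hq1
    rw [map_sub, map_one, sub_eq_zero] at h0
    exact h0
  have hp0 : (p : R ⧸ m) = 0 := by
    have := Ideal.Quotient.eq_zero_iff_mem.mpr hpm
    simpa using this
  -- δ 0 = 0
  have hδ0 : D.δ 0 = 0 := by
    have h := D.delta_add 0 0
    have hs : ∑ i ∈ Finset.Ioo 0 p, ((p.choose i / p : ℕ) : R) * (0 : R) ^ i * 0 ^ (p - i) = 0 :=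
      Finset.sum_eq_zero fun i hi => by
        have hi0 : i ≠ 0 := (Finset.mem_Ioo.mp hi).1.ne'
        simp [zero_pow hi0]
    rw [add_zero, hs, sub_zero] at h
    linear_combination -h
  -- δ (q^i) = 0
  have hδqpow : ∀ i : ℕ, D.δ (q ^ i) = 0 := by
    intro i
    induction i with
    | zero => simpa using D.delta_one
    | succ i ih =>
      have h := D.delta_mul q (q ^ i)
      rw [← pow_succ'] at h
      rw [h, ih, hq]
      ring
  -- key induction
  have key : ∀ n : ℕ, π (D.δ (∑ i ∈ Finset.range n, q ^ i)) = ((auxc p n : ℤ) : R ⧸ m) := by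
    intro n
    induction n with
    | zero => simp [hδ0, auxc, π]
    | succ n ih =>
      rw [Finset.sum_range_succ, D.delta_add, map_sub, map_add, ih, hδqpow, map_zero, add_zero]
      have hT : π (∑ i ∈ Finset.Ioo 0 p,
          ((p.choose i / p : ℕ) : R) * (∑ j ∈ Finset.range n, q ^ j) ^ i * (q ^ n) ^ (p - i))
          = ∑ i ∈ Finset.Ioo 0 p, ((p.choose i / p : ℕ) : R ⧸ m) * ((n : R ⧸ m)) ^ i := by
        rw [map_sum]
        refine Finset.sum_congr rfl fun i hi => ?_
        rw [map_mul, map_mul, map_pow, map_pow, map_natCast]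
        have hqn : π (q ^ n) = 1 := by rw [map_pow, hqm, one_pow]
        have hS : π (∑ j ∈ Finset.range n, q ^ j) = (n : R ⧸ m) := by
          rw [map_sum]
          simp [map_pow, hqm]
        rw [hS, hqn, one_pow, mul_one]
      rw [hT, auxc]
      simp only [Int.cast_sub, Int.cast_sum, Int.cast_mul, Int.cast_pow, Int.cast_natCast]
  -- value of auxc p p
  have h2 : auxc p p = 1 - (p : ℤ) ^ (p - 1) := by
    have hpe : (p : ℤ) ^ p = (p : ℤ) * (p : ℤ) ^ (p - 1) := by
      have h := pow_succ (p : ℤ) (p - 1)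
      rw [Nat.sub_add_cancel hp.pos] at h
      rw [h]; ring
    have h1 : (p : ℤ) * auxc p p = (p : ℤ) * (1 - (p : ℤ) ^ (p - 1)) := by
      rw [auxc_mul p hp p, hpe]; ring
    exact mul_left_cancel₀ (by exact_mod_cast hp.pos.ne') h1
  have hval : π (D.δ (∑ i ∈ Finset.range p, q ^ i)) = 1 := by
    rw [key p, h2]
    have hpos : p - 1 ≠ 0 := by
      have := hp.two_le; omega
    rw [Int.cast_sub, Int.cast_one, Int.cast_pow, Int.cast_natCast, hp0, zero_pow hpos, sub_zero]
  haveI : m.IsMaximal := IsLocalRing.maximalIdeal.isMaximal R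
  haveI : Nontrivial (R ⧸ m) := Ideal.Quotient.nontrivial_iff.mpr this.ne_top
  by_contra hu
  have hmem : D.δ (∑ i ∈ Finset.range p, q ^ i) ∈ m := hu
  have h0 : π (D.δ (∑ i ∈ Finset.range p, q ^ i)) = 0 := Ideal.Quotient.eq_zero_iff_mem.mpr hmem
  rw [hval] at h0
  exact one_ne_zero h0

/-- In the local ring `ℤ[q]_{(p,q−1)}` with its `δ`-structure determined by `δ(q) = 0`,
the `q`-analog `(p)_q = 1 + q + ⋯ + q^(p−1)` is distinguished: `δ((p)_q)` is a unit. -/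
theorem stmt13 (p : ℕ) [Fact p.Prime]
    (P : Ideal (Polynomial ℤ))
    (hP : P = Ideal.span {(p : Polynomial ℤ), Polynomial.X - 1}) [P.IsPrime]
    (D : DeltaStructure (Localization.AtPrime P) p)
    (hq : D.δ (algebraMap (Polynomial ℤ) (Localization.AtPrime P) Polynomial.X) = 0) :
    IsUnit (D.δ (∑ i ∈ Finset.range p,
      (algebraMap (Polynomial ℤ) (Localization.AtPrime P) Polynomial.X) ^ i)) := by
  have hp : p.Prime := Fact.out
  haveI : IsLocalRing (Localization.AtPrime P) := Localization.AtPrime.isLocalRing P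
  have hpP : (p : Polynomial ℤ) ∈ P := by
    rw [hP]; exact Ideal.subset_span (Set.mem_insert _ _)
  have hXP : (Polynomial.X - 1 : Polynomial ℤ) ∈ P := by
    rw [hP]; exact Ideal.subset_span (Set.mem_insert_of_mem _ rfl)
  refine aux_distinguished p hp D _ hq ?_ ?_
  · have := (IsLocalization.AtPrime.to_map_mem_maximal_iff (Localization.AtPrime P) P
      (Polynomial.X - 1)).mpr hXP
    rwa [map_sub, map_one] at this
  · have := (IsLocalization.AtPrime.to_map_mem_maximal_iff (Localization.AtPrime P) P
      (p : Polynomial ℤ)).mpr hpP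
    rwa [map_natCast] at this
end

section
/- Let A be a ring, f, g ∈ A with A g-torsion free and A/gA of bounded f^∞-torsion, and let M be a bounded A-module (g-torsion free with M/gM of bounded f^∞-torsion). Then the sequence 0 → M →(g) M → M/gM → 0 remains exact after classical (f,g)-adic completion: 0 → M̂ →(g) M̂ → (M/gM)^∧ → 0 is exact, where completions are (f,g)-adic (and f-adic for M/gM). In particular the classical completion M̂ is g-torsion free. -/
/-!
Let `I = (f, g)`. Since `I^(n+1) ⊆ (f^(n+1)) + g I^n`, an element `g m ∈ I^(n+N+1) M` can be
written `f^(n+N+1) m' + g z` with `z ∈ I^(n+N) M`; then `f^(n+N+1) m' ∈ gM`, so bounded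
`f^∞`-torsion of `M/gM` gives `f^N m' ∈ gM`, and cancelling `g` shows `m ∈ I^n M`. Thus the
`I`-adic topology of `M` agrees, via `g`, with the subspace topology on `gM`. For any short
exact sequence whose first map is strict in this sense, compatible systems in the completion
can be lifted termwise after shifting indices by `N + 1`, so completion keeps it exact.
-/

open Submodule

namespace AdicCompletion

variable {R : Type*} [CommRing R] {I : Ideal R}
  {M N P : Type*} [AddCommGroup M] [Module R M] [AddCommGroup N] [Module R N]
  [AddCommGroup P] [Module R P] {f : M →ₗ[R] N} {c : ℕ}

theorem map_injective_of_comap_pow_smul_top_le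
    (hf : ∀ n, (I ^ (n + c) • ⊤ : Submodule R N).comap f ≤ I ^ n • ⊤) :
    Function.Injective (map I f) := by
  rw [← LinearMap.ker_eq_bot, LinearMap.ker_eq_bot']
  intro x
  induction x using AdicCompletion.induction_on with | h a => ?_
  intro hx
  refine mk_zero_of _ _ _ ⟨0, fun n _ ↦ ⟨n + c, by omega, n, le_rfl, hf n ?_⟩⟩
  simpa using congrArg (fun x ↦ x.val (n + c)) hx

theorem map_exact_of_comap_pow_smul_top_le {g : N →ₗ[R] P}
    (hf : ∀ n, (I ^ (n + c) • ⊤ : Submodule R N).comap f ≤ I ^ n • ⊤)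
    (hfg : Function.Exact f g) (hg : Function.Surjective g) :
    Function.Exact (map I f) (map I g) := by
  refine LinearMap.exact_of_comp_eq_zero_of_ker_le_range
    (by rw [map_comp, hfg.linearMap_comp_eq_zero, map_zero]) fun y hy ↦ ?_
  induction y using AdicCompletion.induction_on with | h b => ?_
  have hgb (n : ℕ) : g (b n) ∈ (I ^ n • ⊤ : Submodule R P) := by
    simpa using congrArg (fun x ↦ x.val n) hy
  have hlift (n : ℕ) : ∃ u, b n - f u ∈ (I ^ n • ⊤ : Submodule R N) := by
    obtain ⟨w, hw, hgw⟩ : g (b n) ∈ (I ^ n • ⊤ : Submodule R N).map g := by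
      rw [map_smul'', Submodule.map_top, LinearMap.range_eq_top.2 hg]
      exact hgb n
    obtain ⟨u, hu⟩ := (hfg (b n - w)).1 (by simp [hgw])
    exact ⟨u, by rwa [hu, sub_sub_cancel]⟩
  choose u hu using hlift
  have hb {m n : ℕ} (h : m ≤ n) : b n - b m ∈ (I ^ m • ⊤ : Submodule R N) :=
    SModEq.sub_mem.1 (b.property h).symm
  have hmono {m n : ℕ} (h : m ≤ n) : (I ^ n • ⊤ : Submodule R N) ≤ I ^ m • ⊤ :=
    smul_mono_left (Ideal.pow_le_pow_right h)
  -- The shift by `c` is what makes the termwise lifts `I`-adically Cauchy.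
  refine ⟨mk I M (AdicCauchySequence.mk I M (fun n ↦ u (n + c)) fun n ↦ ?_), ?_⟩
  · refine SModEq.sub_mem.2 (hf n ?_)
    have : f (u (n + c) - u (n + 1 + c)) = (b (n + 1 + c) - f (u (n + 1 + c)))
        - (b (n + c) - f (u (n + c))) - (b (n + 1 + c) - b (n + c)) := by
      rw [map_sub]; abel
    rw [mem_comap, this]
    exact sub_mem (sub_mem (hmono (by omega) (hu _)) (hu _)) (hb (by omega))
  · ext n
    have : f (u (n + c)) - b n = (b (n + c) - b n) - (b (n + c) - f (u (n + c))) := by abel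
    rw [map_mk]
    show Submodule.Quotient.mk (f (u (n + c))) = Submodule.Quotient.mk (b n)
    rw [Submodule.Quotient.eq, this]
    exact sub_mem (hb (by omega)) (hmono (by omega) (hu _))

theorem map_lsmul {A M : Type*} [CommRing A] [AddCommGroup M] [Module A M] (I : Ideal A) (r : A) :
    AdicCompletion.map I (LinearMap.lsmul A M r) = LinearMap.lsmul A (AdicCompletion I M) r := by
  ext x n
  rfl

end AdicCompletion

section

variable {A : Type*} [CommRing A] {M : Type*} [AddCommGroup M] [Module A M]

theorem Ideal.span_pair_pow_succ_le (f g : A) (n : ℕ) :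
    Ideal.span {f, g} ^ (n + 1) ≤
      Ideal.span {f ^ (n + 1)} ⊔ Ideal.span {g} * Ideal.span {f, g} ^ n := by
  have hI : Ideal.span {f, g} = Ideal.span {f} ⊔ Ideal.span {g} := Ideal.span_insert f {g}
  induction n with
  | zero => simp [hI]
  | succ n ih =>
    calc Ideal.span {f, g} ^ (n + 2) = Ideal.span {f, g} * Ideal.span {f, g} ^ (n + 1) :=
          pow_succ' _ _
      _ ≤ Ideal.span {f, g} * (Ideal.span {f ^ (n + 1)} ⊔ Ideal.span {g} * Ideal.span {f, g} ^ n) :=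
          Ideal.mul_mono_right ih
      _ = Ideal.span {f ^ (n + 2)} ⊔
            Ideal.span {g} * (Ideal.span {f ^ (n + 1)} ⊔ Ideal.span {f, g} ^ (n + 1)) := by
          rw [Ideal.mul_sup, hI, Ideal.sup_mul, Ideal.span_singleton_mul_span_singleton,
            ← pow_succ', mul_left_comm, ← hI, ← pow_succ', Ideal.mul_sup, sup_assoc,
            sup_comm (Ideal.span {g} * _)]
      _ ≤ _ := by
          gcongr
          refine sup_le ?_ le_rfl
          rw [← Ideal.span_singleton_pow]
          exact Ideal.pow_right_mono (Ideal.span_mono (by simp)) _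

theorem exists_eq_pow_smul_add_smul_of_mem_span_pair_pow_smul_top (f g : A) {n : ℕ} {x : M}
    (hx : x ∈ (Ideal.span {f, g} ^ (n + 1) • ⊤ : Submodule A M)) :
    ∃ m z, z ∈ (Ideal.span {f, g} ^ n • ⊤ : Submodule A M) ∧ x = f ^ (n + 1) • m + g • z := by
  have := smul_mono_left (Ideal.span_pair_pow_succ_le f g n) hx
  rw [sup_smul, Submodule.mul_smul, ideal_span_singleton_smul, ideal_span_singleton_smul,
    mem_sup] at this
  obtain ⟨_, hy, _, hz, rfl⟩ := this
  obtain ⟨m, -, rfl⟩ := (mem_smul_pointwise_iff_exists _ _ _).1 hy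
  obtain ⟨z, hz', rfl⟩ := (mem_smul_pointwise_iff_exists _ _ _).1 hz
  exact ⟨m, z, hz', rfl⟩

theorem mem_span_singleton_smul_top_iff {r : A} {x : M} :
    x ∈ (Ideal.span {r} • ⊤ : Submodule A M) ↔ ∃ m, r • m = x := by
  simp [ideal_span_singleton_smul, mem_smul_pointwise_iff_exists]

theorem LinearMap.range_lsmul (r : A) :
    LinearMap.range (LinearMap.lsmul A M r) = (Ideal.span {r} • ⊤ : Submodule A M) := by
  ext x
  rw [mem_span_singleton_smul_top_iff]
  rfl

theorem comap_lsmul_span_pair_pow_smul_top_le {f g : A} (hg : ∀ m : M, g • m = 0 → m = 0)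
    {N : ℕ} (hf : ∀ x : M ⧸ (Ideal.span {g} • ⊤ : Submodule A M),
      (∃ k : ℕ, f ^ k • x = 0) → f ^ N • x = 0) (n : ℕ) :
    (Ideal.span {f, g} ^ (n + (N + 1)) • ⊤ : Submodule A M).comap (LinearMap.lsmul A M g) ≤
      Ideal.span {f, g} ^ n • ⊤ := by
  intro m hm
  rw [mem_comap, LinearMap.lsmul_apply] at hm
  obtain ⟨m', z, hz, hgm⟩ :=
    exists_eq_pow_smul_add_smul_of_mem_span_pair_pow_smul_top f g (n := n + N) hm
  have hfm' : f ^ (n + N + 1) • m' = g • (m - z) := by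
    rw [smul_sub, hgm]; abel
  obtain ⟨m'', hm''⟩ : ∃ m'', g • m'' = f ^ N • m' := by
    rw [← mem_span_singleton_smul_top_iff, ← Submodule.Quotient.mk_eq_zero,
      Submodule.Quotient.mk_smul]
    refine hf _ ⟨n + N + 1, ?_⟩
    rw [← Submodule.Quotient.mk_smul, Submodule.Quotient.mk_eq_zero, hfm',
      mem_span_singleton_smul_top_iff]
    exact ⟨_, rfl⟩
  have hgfm'' : g • f ^ (n + 1) • m'' = f ^ (n + N + 1) • m' := by
    rw [smul_comm, hm'', smul_smul, ← pow_add, Nat.add_right_comm]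
  have hm : m = z + f ^ (n + 1) • m'' := by
    refine sub_eq_zero.1 (hg _ ?_)
    rw [smul_sub, smul_add, hgfm'', hfm', smul_sub]
    abel
  rw [hm]
  refine add_mem (smul_mono_left (Ideal.pow_le_pow_right (by omega)) hz) ?_
  exact smul_mono_left (Ideal.pow_le_pow_right (by omega))
    (smul_mem_smul (Ideal.pow_mem_pow (Ideal.subset_span (by simp)) _) mem_top)

end

theorem stmt17_general (A : Type*) [CommRing A] (f g : A)
    (M : Type*) [AddCommGroup M] [Module A M]
    (hMg : ∀ m : M, g • m = 0 → m = 0)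
    (hM : ∃ N : ℕ, ∀ x : M ⧸ (Ideal.span {g} • ⊤ : Submodule A M),
      (∃ k : ℕ, f ^ k • x = 0) → f ^ N • x = 0) :
    Function.Injective
        (LinearMap.lsmul A (AdicCompletion (Ideal.span {f, g}) M) g) ∧
      Function.Exact
        (LinearMap.lsmul A (AdicCompletion (Ideal.span {f, g}) M) g)
        (AdicCompletion.map (Ideal.span {f, g})
          (Ideal.span {g} • ⊤ : Submodule A M).mkQ) ∧
      Function.Surjective
        (AdicCompletion.map (Ideal.span {f, g})
          (Ideal.span {g} • ⊤ : Submodule A M).mkQ) := by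
  obtain ⟨N, hN⟩ := hM
  have hstrict := comap_lsmul_span_pair_pow_smul_top_le (f := f) hMg hN
  have hexact : Function.Exact (LinearMap.lsmul A M g) (Ideal.span {g} • ⊤ : Submodule A M).mkQ :=
    LinearMap.exact_iff.2 (by rw [ker_mkQ, LinearMap.range_lsmul])
  rw [← AdicCompletion.map_lsmul]
  exact ⟨AdicCompletion.map_injective_of_comap_pow_smul_top_le hstrict,
    AdicCompletion.map_exact_of_comap_pow_smul_top_le hstrict hexact (mkQ_surjective _),
    AdicCompletion.map_surjective _ (mkQ_surjective _)⟩

/-- If `A` is bounded (`g`-torsion free with `A/gA` of bounded `f^∞`-torsion) and `M` is a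
bounded `A`-module (`g`-torsion free with `M/gM` of bounded `f^∞`-torsion), then the
sequence `0 → M →(g) M → M/gM → 0` stays exact after classical `(f,g)`-adic completion;
in particular the completion of `M` is `g`-torsion free. -/
theorem stmt17 (A : Type*) [CommRing A] (f g : A)
    (M : Type*) [AddCommGroup M] [Module A M]
    (hAg : ∀ a : A, g * a = 0 → a = 0)
    (hA : ∃ N : ℕ, ∀ x : A ⧸ Ideal.span {g}, (∃ k : ℕ, f ^ k • x = 0) → f ^ N • x = 0)
    (hMg : ∀ m : M, g • m = 0 → m = 0)
    (hM : ∃ N : ℕ, ∀ x : M ⧸ (Ideal.span {g} • ⊤ : Submodule A M),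
      (∃ k : ℕ, f ^ k • x = 0) → f ^ N • x = 0) :
    Function.Injective
        (LinearMap.lsmul A (AdicCompletion (Ideal.span {f, g}) M) g) ∧
      Function.Exact
        (LinearMap.lsmul A (AdicCompletion (Ideal.span {f, g}) M) g)
        (AdicCompletion.map (Ideal.span {f, g})
          (Ideal.span {g} • ⊤ : Submodule A M).mkQ) ∧
      Function.Surjective
        (AdicCompletion.map (Ideal.span {f, g})
          (Ideal.span {g} • ⊤ : Submodule A M).mkQ) :=
  stmt17_general A f g M hMg hM
end
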